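/- Let u ∈ ℂ with 0 < Re u < 1/2 and ζ(2u) ≠ 0. Then (2^{1−2u} − 1) · (cos(πu/2) + sin(πu/2)) · π^{−u} · Γ(u) = 2 · Γ_u · ζ₂(1−2u) / ζ(2u). -/

import Mathlib

/-!
Apply the functional equation `ζ(1 - 2u) = 2 (2π)^{-2u} Γ(2u) cos(πu) ζ(2u)`; after cancelling
`ζ(2u)` and the powers of `2` and `π`, the claim becomes the pure Gamma identity
`2 cos(πu) Γ(2u) Γ(1/4 - u/2) = 8^u (cos(πu/2) + sin(πu/2)) Γ(u) Γ(1/4 + u/2)`.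
That identity follows from Legendre's duplication formula at `u` and at `1/4 + u/2`, the
reflection formula at `1/4 - u/2`, and the factorisation
`cos(πu) = (cos(πu/2) - sin(πu/2)) (cos(πu/2) + sin(πu/2))` with
`cos(πu/2) - sin(πu/2) = √2 sin(π/4 - πu/2)`.
-/

open Complex

/-- `Γ_u = (8/π)^{-u} Γ((1/2-u)/2) / Γ((1/2+u)/2)`. -/
noncomputable def GammaFactor (α : ℂ) : ℂ :=
  ((8 / Real.pi : ℝ) : ℂ) ^ (-α) *
    Complex.Gamma ((1 / 2 - α) / 2) / Complex.Gamma ((1 / 2 + α) / 2)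

/-- `ζ₂(s) = (1 - 2^{-s}) ζ(s)`, the zeta function without its Euler factor at 2. -/
noncomputable def zeta2 (s : ℂ) : ℂ := (1 - (2 : ℂ) ^ (-s)) * riemannZeta s

open scoped Real

namespace Complex

lemma ne_intCast_of_re_mem_Ioo {z : ℂ} (h0 : 0 < z.re) (h1 : z.re < 1) (n : ℤ) : z ≠ n := by
  rintro rfl
  norm_cast at h0 h1
  omega

lemma sin_pi_div_four_sub (x : ℂ) : sin (π / 4 - x) = √2 / 2 * (cos x - sin x) := by
  rw [sin_sub, ← ofReal_ofNat 4, ← ofReal_div, ← ofReal_sin, ← ofReal_cos,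
    Real.sin_pi_div_four, Real.cos_pi_div_four]
  push_cast
  ring

lemma two_cpow_half : (2 : ℂ) ^ (1 / 2 : ℂ) = √2 := by
  rw [Real.sqrt_eq_rpow, ofReal_cpow zero_le_two]
  push_cast
  rfl

lemma eight_cpow_mul_two_cpow_mul_two_cpow (u : ℂ) :
    (8 : ℂ) ^ u * 2 ^ (1 - 2 * u) * 2 ^ (1 / 2 - u) = 2 * √2 := by
  have h8 : (8 : ℂ) ^ u = 2 ^ (3 * u) := by
    rw [show (8 : ℂ) = (2 : ℕ) ^ 3 by norm_num, ← natCast_cpow_natCast_mul]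
    norm_num
  rw [h8, ← cpow_add _ _ two_ne_zero, ← cpow_add _ _ two_ne_zero,
    show 3 * u + (1 - 2 * u) + (1 / 2 - u) = 1 + 1 / 2 by ring, cpow_add _ _ two_ne_zero,
    cpow_one, two_cpow_half]

lemma two_cpow_one_sub_two_mul (u : ℂ) : (2 : ℂ) ^ (1 - 2 * u) = 2 / (2 ^ u) ^ 2 := by
  rw [cpow_sub _ _ two_ne_zero, cpow_one, cpow_ofNat_mul]

lemma two_mul_pi_cpow_neg_two_mul (u : ℂ) :
    (2 * π : ℂ) ^ (-(2 * u)) = ((2 ^ u) ^ 2 * ((π : ℂ) ^ u) ^ 2)⁻¹ := by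
  rw [cpow_neg, ← ofReal_ofNat, mul_cpow_ofReal_nonneg zero_le_two Real.pi_nonneg, ofReal_ofNat,
    cpow_ofNat_mul, cpow_ofNat_mul]

lemma ofReal_eight_div_pi_cpow_neg (u : ℂ) :
    ((8 / π : ℝ) : ℂ) ^ (-u) = (π : ℂ) ^ u / 8 ^ u := by
  rw [cpow_neg, ofReal_div, div_cpow_ofReal_nonneg (by norm_num) Real.pi_nonneg, inv_div,
    ofReal_ofNat]

lemma Gamma_mul_Gamma_one_sub_mul_sin {z : ℂ} (hz : ∀ n : ℤ, z ≠ n) :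
    Gamma z * Gamma (1 - z) * sin (π * z) = π := by
  have hsin : sin (π * z) ≠ 0 := by
    rw [sin_ne_zero_iff]
    intro k hk
    exact hz k (mul_left_cancel₀ (ofReal_ne_zero.2 Real.pi_ne_zero) (by rw [hk]; ring))
  rw [Gamma_mul_Gamma_one_sub, div_mul_cancel₀ _ hsin]

lemma two_mul_cos_mul_Gamma_two_mul_mul_Gamma_quarter_sub {u : ℂ} (h0 : -1 / 2 < u.re)
    (h1 : u.re < 1 / 2) :
    2 * cos (π * u) * Gamma (2 * u) * Gamma ((1 / 2 - u) / 2) =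
      8 ^ u * (cos (π * u / 2) + sin (π * u / 2)) * Gamma u * Gamma ((1 / 2 + u) / 2) := by
  set C := cos (π * u / 2)
  set S := sin (π * u / 2)
  have hsqrt2 : (√2 : ℂ) ^ 2 = 2 := by norm_cast; simp
  have hsqrtπ : (√π : ℂ) ^ 2 = π := by norm_cast; simp [Real.pi_nonneg]
  have hcos : cos (π * u) = (C - S) * (C + S) := by
    rw [show π * u = 2 * (π * u / 2) by ring, cos_two_mul']
    ring
  have hrefl : Gamma ((1 / 2 - u) / 2) * Gamma ((1 / 2 + u) / 2 + 1 / 2) *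
      (√2 / 2 * (C - S)) = π := by
    have := Gamma_mul_Gamma_one_sub_mul_sin
      (ne_intCast_of_re_mem_Ioo (z := (1 / 2 - u) / 2) (by norm_num; linarith)
        (by norm_num; linarith))
    rwa [show 1 - (1 / 2 - u) / 2 = (1 / 2 + u) / 2 + 1 / 2 by ring,
      show π * ((1 / 2 - u) / 2) = π / 4 - π * u / 2 by ring, sin_pi_div_four_sub] at this
  have hdup := Gamma_mul_Gamma_add_half u
  have hdup' := Gamma_mul_Gamma_add_half ((1 / 2 + u) / 2)
  rw [show 2 * ((1 / 2 + u) / 2) = u + 1 / 2 by ring,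
    show 1 - (u + 1 / 2) = 1 / 2 - u by ring] at hdup'
  set G := Gamma (2 * u)
  set B := Gamma (u + 1 / 2)
  set W := Gamma ((1 / 2 + u) / 2)
  set W' := Gamma ((1 / 2 + u) / 2 + 1 / 2)
  have hcos_refl : 2 * cos (π * u) * Gamma ((1 / 2 - u) / 2) * W' = 2 * √2 * π * (C + S) := by
    linear_combination 2 * Gamma ((1 / 2 - u) / 2) * W' * hcos
      - (C + S) * Gamma ((1 / 2 - u) / 2) * W' * (C - S) * hsqrt2 + 2 * √2 * (C + S) * hrefl
  have hdup_prod : 8 ^ u * (Gamma u * W) * (B * W') = 2 * √2 * π * (G * B) := by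
    linear_combination W * W' * 8 ^ u * hdup + 8 ^ u * G * 2 ^ (1 - 2 * u) * √π * hdup'
      + G * B * √π ^ 2 * eight_cpow_mul_two_cpow_mul_two_cpow u + 2 * √2 * G * B * hsqrtπ
  have hB : B ≠ 0 := Gamma_ne_zero_of_re_pos (by norm_num; linarith)
  have hW' : W' ≠ 0 := Gamma_ne_zero_of_re_pos (by norm_num; linarith)
  apply mul_right_cancel₀ (mul_ne_zero hB hW')
  linear_combination G * B * hcos_refl - (C + S) * hdup_prod

end Complex

/-- The Archimedean identity of Lemma 6.2. -/
theorem archimedean_identity (u : ℂ) (h0 : 0 < u.re) (h1 : u.re < 1 / 2)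
    (hζ : riemannZeta (2 * u) ≠ 0) :
    ((2 : ℂ) ^ (1 - 2 * u) - 1) *
        (Complex.cos (Real.pi * u / 2) + Complex.sin (Real.pi * u / 2)) *
        ((Real.pi : ℂ)) ^ (-u) * Complex.Gamma u =
      2 * GammaFactor u * zeta2 (1 - 2 * u) / riemannZeta (2 * u) := by
  have hs : ∀ n : ℕ, 2 * u ≠ -n := by
    intro n h
    have := congrArg re h
    norm_num at this
    linarith [n.cast_nonneg (α := ℝ)]
  have hs' : 2 * u ≠ 1 := by
    intro h
    have := congrArg re h
    norm_num at this
    linarith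
  have hW : Gamma ((1 / 2 + u) / 2) ≠ 0 := Gamma_ne_zero_of_re_pos (by norm_num; linarith)
  have key := two_mul_cos_mul_Gamma_two_mul_mul_Gamma_quarter_sub (u := u) (by linarith) h1
  have h2 : (2 : ℂ) ^ u ≠ 0 := by simp
  have hπ : (π : ℂ) ^ u ≠ 0 := by simp [Real.pi_ne_zero]
  have h8 : (8 : ℂ) ^ u ≠ 0 := by simp
  unfold GammaFactor zeta2
  rw [riemannZeta_one_sub hs hs', show (π : ℂ) * (2 * u) / 2 = π * u by ring,
    cpow_neg (2 : ℂ), two_cpow_one_sub_two_mul, two_mul_pi_cpow_neg_two_mul,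
    ofReal_eight_div_pi_cpow_neg, cpow_neg]
  -- hide the Gamma values from `field_simp`, which would otherwise rewrite their arguments
  generalize Gamma ((1 / 2 + u) / 2) = W at hW key ⊢
  generalize Gamma ((1 / 2 - u) / 2) = R at key ⊢
  field_simp
  linear_combination (((2 : ℂ) ^ u) ^ 2 - 2) * key
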